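/- arXiv:2204.05017 — 5 statements merged into one kernel-verified Lean document; each statement's English description precedes it below -/
import Mathlib

section
/- In the setting of the previous statement, if there exist m_1 < 0 < m_2 in (−1,1) with v_0(m_2) − v_0(m_1) = −2, then there exists s* ≤ (m_2−m_1)/2 such that Vol(s,m) > 0 for all m when s < s*, while min_m Vol(s*,m) = 0; consequently max_m ρ(s,m) → +∞ as s → s*⁻ (density concentration in finite time). -/
open Filter

/-- Finite-time density concentration for the 1D Chaplygin gas: if
`v₀(m₂) − v₀(m₁) = −2` with `m₁ < 0 < m₂` in `(−1,1)`, then there exists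
`s* ≤ (m₂−m₁)/2` such that `Vol(s,m) > 0` for all `m` when `0 ≤ s < s*`,
`min_m Vol(s*,m) = 0`, and `max_m ρ(s,m) = max_m 1/Vol(s,m) → +∞` as `s → s*⁻`. -/
theorem stmt4 (v0 : ℝ → ℝ) (hv0 : ContDiff ℝ (⊤ : ℕ∞) v0)
    (hsupp : HasCompactSupport v0) (hsub : tsupport v0 ⊆ Set.Ioo (-1 : ℝ) 1)
    (hne : v0 ≠ 0)
    (m1 m2 : ℝ) (hm1 : -1 < m1) (hm10 : m1 < 0) (hm20 : 0 < m2) (hm2 : m2 < 1)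
    (hjump : v0 m2 - v0 m1 = -2) :
    let Vol : ℝ → ℝ → ℝ := fun s m => 1 + (v0 (m + s) - v0 (m - s)) / 2
    ∃ sStar : ℝ, 0 < sStar ∧ sStar ≤ (m2 - m1) / 2 ∧
      (∀ s, 0 ≤ s → s < sStar → ∀ m, 0 < Vol s m) ∧
      (∃ mStar, Vol sStar mStar = 0) ∧ (∀ m, 0 ≤ Vol sStar m) ∧
      (∀ K : ℝ, ∀ᶠ s in nhdsWithin sStar (Set.Iio sStar), ∃ m, K < 1 / Vol s m) := by
  intro Vol
  set s0 : ℝ := (m2 - m1) / 2 with hs0def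
  have hs0pos : 0 < s0 := by unfold s0; linarith
  have hs0lt1 : s0 < 1 := by unfold s0; linarith
  -- v0 vanishes outside (-1,1)
  have hzero : ∀ x : ℝ, x ∉ Set.Ioo (-1 : ℝ) 1 → v0 x = 0 := fun x hx =>
    image_eq_zero_of_notMem_tsupport (fun h => hx (hsub h))
  -- Vol = 1 outside a compact m-window (for 0 ≤ s ≤ 1)
  have hVolone : ∀ s m : ℝ, 0 ≤ s → s ≤ 1 → m ∉ Set.Icc (-2 : ℝ) 2 → Vol s m = 1 := by
    intro s m hs0 hs1 hm
    rw [Set.mem_Icc, not_and_or] at hm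
    have h1 : v0 (m + s) = 0 := by
      apply hzero; rw [Set.mem_Ioo, not_and_or]
      rcases hm with hm | hm
      · push_neg at hm; left; push_neg; linarith
      · push_neg at hm; right; push_neg; linarith
    have h2 : v0 (m - s) = 0 := by
      apply hzero; rw [Set.mem_Ioo, not_and_or]
      rcases hm with hm | hm
      · push_neg at hm; left; push_neg; linarith
      · push_neg at hm; right; push_neg; linarith
    simp only [Vol, h1, h2]; ring
  have hVolcont : Continuous (Function.uncurry Vol) := by
    have hc := hv0.continuous
    exact continuous_const.add (((hc.comp (continuous_snd.add continuous_fst)).sub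
      (hc.comp (continuous_snd.sub continuous_fst))).div_const 2)
  -- the minimum function
  set g : ℝ → ℝ := fun s => sInf (Vol s '' Set.Icc (-2 : ℝ) 2) with hgdef
  have hgcont : Continuous g := isCompact_Icc.continuous_sInf hVolcont
  -- g s ≤ Vol s m for m in the window
  have hgle : ∀ s m : ℝ, m ∈ Set.Icc (-2 : ℝ) 2 → g s ≤ Vol s m := by
    intro s m hm
    exact csInf_le (isCompact_Icc.bddBelow_image
      (hVolcont.comp (Continuous.prodMk_right s)).continuousOn) (Set.mem_image_of_mem _ hm)
  -- g is attained
  have hgmin : ∀ s : ℝ, ∃ m ∈ Set.Icc (-2 : ℝ) 2, Vol s m = g s := by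
    intro s
    obtain ⟨m, hmI, hmin⟩ := isCompact_Icc.exists_isMinOn (Set.nonempty_Icc.mpr (by norm_num : (-2:ℝ) ≤ 2))
      (hVolcont.comp (Continuous.prodMk_right s)).continuousOn
    refine ⟨m, hmI, ?_⟩
    refine (IsLeast.csInf_eq ⟨Set.mem_image_of_mem _ hmI, ?_⟩).symm
    rintro _ ⟨m', hm', rfl⟩
    exact hmin hm'
  -- the bad set
  set A : Set ℝ := Set.Icc 0 s0 ∩ {s | g s ≤ 0} with hAdef
  have hAclosed : IsClosed A := isClosed_Icc.inter (isClosed_le hgcont continuous_const)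
  have hs0A : s0 ∈ A := by
    constructor
    · exact ⟨le_of_lt hs0pos, le_refl _⟩
    · have hm0 : (m1 + m2) / 2 ∈ Set.Icc (-2 : ℝ) 2 := by
        constructor <;> [linarith; linarith]
      have : Vol s0 ((m1 + m2) / 2) = 0 := by
        simp only [Vol]
        have e1 : (m1 + m2) / 2 + s0 = m2 := by unfold s0; ring
        have e2 : (m1 + m2) / 2 - s0 = m1 := by unfold s0; ring
        rw [e1, e2, hjump]; ring
      have := hgle s0 _ hm0
      simp only [Set.mem_setOf_eq]
      linarith [this, hgle s0 _ hm0]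
  have hAbdd : BddBelow A := ⟨0, fun s hs => hs.1.1⟩
  set sStar : ℝ := sInf A with hsStardef
  have hsStarA : sStar ∈ A := hAclosed.csInf_mem ⟨s0, hs0A⟩ hAbdd
  have hsStarle : sStar ≤ s0 := csInf_le hAbdd hs0A
  have hsStar0 : 0 ≤ sStar := hsStarA.1.1
  have hsStar1 : sStar ≤ 1 := le_of_lt (lt_of_le_of_lt hsStarle hs0lt1)
  -- if Vol s m ≤ 0 with 0 ≤ s ≤ 1 then g s ≤ 0
  have hkey : ∀ s m : ℝ, 0 ≤ s → s ≤ 1 → Vol s m ≤ 0 → g s ≤ 0 := by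
    intro s m hs0' hs1' hVm
    by_cases hm : m ∈ Set.Icc (-2 : ℝ) 2
    · exact le_trans (hgle s m hm) hVm
    · exact absurd (hVolone s m hs0' hs1' hm) (by intro h; rw [h] at hVm; linarith)
  -- positivity before sStar
  have hpos : ∀ s, 0 ≤ s → s < sStar → ∀ m, 0 < Vol s m := by
    intro s hs hss m
    by_contra hc
    push_neg at hc
    have hsle : s ≤ s0 := le_of_lt (lt_of_lt_of_le hss hsStarle)
    have : s ∈ A := ⟨⟨hs, hsle⟩, hkey s m hs (le_trans hsle (le_of_lt hs0lt1)) hc⟩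
    exact absurd (csInf_le hAbdd this) (not_le.2 hss)
  -- sStar > 0 via uniform continuity
  have hUC : UniformContinuous v0 :=
    hv0.continuous.uniformContinuous_of_tendsto_cocompact hsupp.is_zero_at_infty
  obtain ⟨δ, hδpos, hδ⟩ := Metric.uniformContinuous_iff.mp hUC 2 (by norm_num)
  have hsStarpos : 0 < sStar := by
    have hlb : δ / 2 ≤ sStar := by
      apply le_csInf ⟨s0, hs0A⟩
      intro s hs
      obtain ⟨m, hmI, hmg⟩ := hgmin s
      have hV : Vol s m ≤ 0 := hmg.trans_le hs.2
      have hjmp : v0 (m + s) - v0 (m - s) ≤ -2 := by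
        simp only [Vol] at hV; linarith
      by_contra hlt
      push_neg at hlt
      have hdist : dist (m + s) (m - s) < δ := by
        rw [Real.dist_eq]
        have : m + s - (m - s) = 2 * s := by ring
        rw [this, abs_of_nonneg (by linarith [hs.1.1] : (0:ℝ) ≤ 2 * s)]
        linarith [hs.1.1]
      have := hδ hdist
      rw [Real.dist_eq] at this
      have := abs_lt.mp this
      linarith [this.1]
    linarith
  -- nonnegativity at sStar
  have hnonneg : ∀ m, 0 ≤ Vol sStar m := by
    intro m
    by_contra hc
    push_neg at hc
    have hφ : Continuous fun s => Vol s m := hVolcont.comp (continuous_id.prodMk continuous_const)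
    have hopen : IsOpen {s : ℝ | Vol s m < 0} := isOpen_lt hφ continuous_const
    obtain ⟨ε, hεpos, hball⟩ := Metric.mem_nhds_iff.mp (hopen.mem_nhds hc)
    set s := max (sStar / 2) (sStar - ε / 2) with hsdef
    have hslt : s < sStar := by
      apply max_lt <;> linarith
    have hsge : 0 ≤ s := le_trans (by linarith) (le_max_left _ _)
    have hsball : s ∈ Metric.ball sStar ε := by
      rw [Metric.mem_ball, Real.dist_eq, abs_of_nonpos (by linarith)]
      have : sStar - ε / 2 ≤ s := le_max_right _ _
      linarith
    have := hball hsball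
    exact absurd (hpos s hsge hslt m) (not_lt.2 (le_of_lt this))
  -- the minimum at sStar is zero
  obtain ⟨mStar, hmStarI, hmStar⟩ := hgmin sStar
  have hVmStar : Vol sStar mStar = 0 :=
    le_antisymm (hmStar.trans_le hsStarA.2) (hnonneg mStar)
  refine ⟨sStar, hsStarpos, hsStarle, hpos, ⟨mStar, hVmStar⟩, hnonneg, ?_⟩
  -- blow-up
  intro K
  have hφ : Continuous fun s => Vol s mStar :=
    hVolcont.comp (continuous_id.prodMk continuous_const)
  have h1 : ∀ᶠ s in nhdsWithin sStar (Set.Iio sStar), Vol s mStar < 1 / (|K| + 1) := by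
    apply Filter.Eventually.filter_mono nhdsWithin_le_nhds
    have : Vol sStar mStar < 1 / (|K| + 1) := by
      rw [hVmStar]; positivity
    exact (hφ.continuousAt).eventually_lt continuous_const.continuousAt this
  have h2 : ∀ᶠ s in nhdsWithin sStar (Set.Iio sStar), 0 < s := by
    apply Filter.Eventually.filter_mono nhdsWithin_le_nhds
    exact Filter.Tendsto.eventually_const_lt hsStarpos Filter.tendsto_id
  have h3 : ∀ᶠ s in nhdsWithin sStar (Set.Iio sStar), s < sStar :=
    eventually_mem_nhdsWithin.mono fun s hs => hs
  filter_upwards [h1, h2, h3] with s hs1 hs2 hs3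
  refine ⟨mStar, ?_⟩
  have hVpos : 0 < Vol s mStar := hpos s (le_of_lt hs2) hs3 mStar
  have : |K| + 1 < 1 / Vol s mStar := by
    rw [lt_div_iff₀ hVpos]
    calc (|K| + 1) * Vol s mStar < (|K| + 1) * (1 / (|K| + 1)) := by
          apply mul_lt_mul_of_pos_left hs1 (by positivity)
      _ = 1 := by field_simp
  calc K ≤ |K| := le_abs_self K
    _ < 1 / Vol s mStar := by linarith
end

section
/- For the acoustic metric of the 2D Chaplygin potential equation, the inverse foliation density μ satisfies the transport equation L̊μ = c^{-1}μ(L̊^α L̊φ_α − L̊c) along the null generator L̊, where φ_α = ∂_αφ, c = 1 + 2φ_0 + φ_1² + φ_2², and L̊c = 2L̊φ_0 + 2φ_1L̊φ_1 + 2φ_2L̊φ_2. In particular, L̊μ is a linear combination of the 'good' derivatives L̊φ_α with coefficients depending only on (φ, L̊^i, μ), containing no Tφ_α terms. -/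
/-- Partial derivative `∂_α f` in coordinates on `ℝ³`. -/
noncomputable def pd7 (f : (Fin 3 → ℝ) → ℝ) (α : Fin 3) (x : Fin 3 → ℝ) : ℝ :=
  fderiv ℝ f x (Pi.single α 1)

/-- `c = 1 + 2∂_tφ + |∇φ|²`. -/
noncomputable def cF (φ : (Fin 3 → ℝ) → ℝ) (x : Fin 3 → ℝ) : ℝ :=
  1 + 2 * pd7 φ 0 x + (pd7 φ 1 x) ^ 2 + (pd7 φ 2 x) ^ 2

/-- The inverse acoustic metric `g^{αβ}(∂φ)`. -/
noncomputable def giF (φ : (Fin 3 → ℝ) → ℝ) (x : Fin 3 → ℝ) : Matrix (Fin 3) (Fin 3) ℝ :=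
  !![-1, -pd7 φ 1 x, -pd7 φ 2 x;
     -pd7 φ 1 x, cF φ x - (pd7 φ 1 x) ^ 2, -(pd7 φ 1 x * pd7 φ 2 x);
     -pd7 φ 2 x, -(pd7 φ 1 x * pd7 φ 2 x), cF φ x - (pd7 φ 2 x) ^ 2]

/-- Inverse foliation density `μ = −(g^{α0}∂_αu)⁻¹`. -/
noncomputable def muF (φ u : (Fin 3 → ℝ) → ℝ) (x : Fin 3 → ℝ) : ℝ :=
  -(∑ α, giF φ x α 0 * pd7 u α x)⁻¹

/-- The rescaled null generator `L̊ = μL̃`, `L̃^β = −g^{αβ}∂_αu`. -/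
noncomputable def LrF (φ u : (Fin 3 → ℝ) → ℝ) (β : Fin 3) (x : Fin 3 → ℝ) : ℝ :=
  muF φ u x * -(∑ α, giF φ x α β * pd7 u α x)

section helpers

lemma pd7_contDiff {f : (Fin 3 → ℝ) → ℝ} (hf : ContDiff ℝ (⊤ : ℕ∞) f) (α : Fin 3) :
    ContDiff ℝ (⊤ : ℕ∞) (pd7 f α) :=
  (hf.fderiv_right (by simp)).clm_apply contDiff_const

variable {f g : (Fin 3 → ℝ) → ℝ} {α : Fin 3} {x : Fin 3 → ℝ}

lemma pd7_add (hf : DifferentiableAt ℝ f x) (hg : DifferentiableAt ℝ g x) :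
    pd7 (fun y => f y + g y) α x = pd7 f α x + pd7 g α x := by
  simp [pd7, fderiv_fun_add hf hg]

lemma pd7_sub (hf : DifferentiableAt ℝ f x) (hg : DifferentiableAt ℝ g x) :
    pd7 (fun y => f y - g y) α x = pd7 f α x - pd7 g α x := by
  simp [pd7, fderiv_fun_sub hf hg]

lemma pd7_const (c : ℝ) : pd7 (fun _ => c) α x = 0 := by
  simp [pd7]

lemma pd7_mul (hf : DifferentiableAt ℝ f x) (hg : DifferentiableAt ℝ g x) :
    pd7 (fun y => f y * g y) α x = f x * pd7 g α x + g x * pd7 f α x := by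
  simp [pd7, fderiv_fun_mul hf hg]

lemma pd7_const_mul (c : ℝ) (hf : DifferentiableAt ℝ f x) :
    pd7 (fun y => c * f y) α x = c * pd7 f α x := by
  simp [pd7, fderiv_const_mul hf]

lemma pd7_sq (hf : DifferentiableAt ℝ f x) :
    pd7 (fun y => f y ^ 2) α x = 2 * f x * pd7 f α x := by
  have h : (fun y => f y ^ 2) = fun y => f y * f y := by ext y; ring
  rw [h, pd7_mul hf hf]; ring

lemma pd7_inv (hf : DifferentiableAt ℝ f x) (h0 : f x ≠ 0) :
    pd7 (fun y => (f y)⁻¹) α x = -((f x) ^ 2)⁻¹ * pd7 f α x := by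
  have h := ((hasFDerivAt_inv h0).comp x hf.hasFDerivAt).fderiv
  simp only [Function.comp_def] at h
  simp [pd7, h, mul_comm]

lemma pd7_symm {f : (Fin 3 → ℝ) → ℝ} (hf : ContDiff ℝ (⊤ : ℕ∞) f) (α β : Fin 3) (x : Fin 3 → ℝ) :
    pd7 (pd7 f α) β x = pd7 (pd7 f β) α x := by
  have hd : Differentiable ℝ f := hf.differentiable (by simp)
  have hd' : Differentiable ℝ (fderiv ℝ f) := (hf.fderiv_right (m := (⊤ : ℕ∞)) (by simp)).differentiable (by simp)
  have key : ∀ v w, fderiv ℝ (fderiv ℝ f) x v w = fderiv ℝ (fderiv ℝ f) x w v := fun v w =>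
    second_derivative_symmetric (fun y => (hd y).hasFDerivAt) (hd' x).hasFDerivAt v w
  have expand : ∀ (γ δ : Fin 3), pd7 (pd7 f γ) δ x
      = fderiv ℝ (fderiv ℝ f) x (Pi.single δ 1) (Pi.single γ 1) := by
    intro γ δ
    have h : fderiv ℝ (fun y => fderiv ℝ f y (Pi.single γ 1)) x
        = (fderiv ℝ (fderiv ℝ f) x).flip (Pi.single γ 1) := by
      have := fderiv_clm_apply (c := fderiv ℝ f) (u := fun _ => Pi.single γ 1)
        (hd' x) (differentiableAt_const _)
      simpa using this
    have hpd : pd7 f γ = fun y => fderiv ℝ f y (Pi.single γ 1) := rfl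
    rw [pd7, hpd, h]; rfl
  rw [expand, expand, key]

set_option maxHeartbeats 1600000 in
set_option maxRecDepth 8000 in
lemma key7 (a1 a2 c S b1 b2 P00 P01 P02 P11 P12 P22 U00 U01 U02 U11 U12 U22 : ℝ)
    (hS : S ≠ 0) (hc : c ≠ 0)
    (hE : c*(b1^2 + b2^2) - S^2 = 0)
    (hE0 : (2*P00 + 2*a1*P01 + 2*a2*P02)*(b1^2+b2^2) + c*(2*b1*U01 + 2*b2*U02)
      - 2*S*(U00 + a1*U01 + a2*U02 + b1*P01 + b2*P02) = 0)
    (hE1 : (2*P01 + 2*a1*P11 + 2*a2*P12)*(b1^2+b2^2) + c*(2*b1*U11 + 2*b2*U12)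
      - 2*S*(U01 + a1*U11 + a2*U12 + b1*P11 + b2*P12) = 0)
    (hE2 : (2*P02 + 2*a1*P12 + 2*a2*P22)*(b1^2+b2^2) + c*(2*b1*U12 + 2*b2*U22)
      - 2*S*(U02 + a1*U12 + a2*U22 + b1*P12 + b2*P22) = 0) :
    (S⁻¹ * S) * (-(S^2)⁻¹ * (U00 + (a1*U01 + b1*P01) + (a2*U02 + b2*P02)))
    + (S⁻¹ * (a1*S - c*b1)) * (-(S^2)⁻¹ * (U01 + (a1*U11 + b1*P11) + (a2*U12 + b2*P12)))
    + (S⁻¹ * (a2*S - c*b2)) * (-(S^2)⁻¹ * (U02 + (a1*U12 + b1*P12) + (a2*U22 + b2*P22)))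
    = c⁻¹ * S⁻¹ *
      (((S⁻¹ * S) * ((S⁻¹ * S) * P00 + (S⁻¹ * (a1*S - c*b1)) * P01 + (S⁻¹ * (a2*S - c*b2)) * P02)
        + (S⁻¹ * (a1*S - c*b1)) * ((S⁻¹ * S) * P01 + (S⁻¹ * (a1*S - c*b1)) * P11 + (S⁻¹ * (a2*S - c*b2)) * P12)
        + (S⁻¹ * (a2*S - c*b2)) * ((S⁻¹ * S) * P02 + (S⁻¹ * (a1*S - c*b1)) * P12 + (S⁻¹ * (a2*S - c*b2)) * P22))
       - ((S⁻¹ * S) * (2*P00 + 2*a1*P01 + 2*a2*P02)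
          + (S⁻¹ * (a1*S - c*b1)) * (2*P01 + 2*a1*P11 + 2*a2*P12)
          + (S⁻¹ * (a2*S - c*b2)) * (2*P02 + 2*a1*P12 + 2*a2*P22))) := by
  field_simp
  linear_combination (1) * ((c/2)*hE0 + (c*a1/2)*hE1 + (c*a2/2)*hE2
    - (P00 + 2*a1*P01 + 2*a2*P02 + a1^2*P11 + 2*a1*a2*P12 + a2^2*P22)*hE)

end helpers


set_option maxHeartbeats 1600000 in
set_option maxRecDepth 8000 in
/-- Transport equation for the inverse foliation density of the 2D Chaplygin
potential equation: `L̊μ = c⁻¹ μ (L̊^α L̊φ_α − L̊c)`, so `L̊μ` is a combination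
of the good derivatives `L̊φ_α` only. -/
theorem stmt7 (φ u : (Fin 3 → ℝ) → ℝ)
    (hφ : ContDiff ℝ (⊤ : ℕ∞) φ) (hu : ContDiff ℝ (⊤ : ℕ∞) u)
    (hwave : ∀ x, ∑ α, ∑ β, giF φ x α β * pd7 (pd7 φ β) α x = 0)
    (heik : ∀ x, ∑ α, ∑ β, giF φ x α β * pd7 u α x * pd7 u β x = 0)
    (hden : ∀ x, ∑ α, giF φ x α 0 * pd7 u α x ≠ 0)
    (hc : ∀ x, cF φ x ≠ 0) :
    ∀ x, ∑ β, LrF φ u β x * pd7 (muF φ u) β x =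
      (cF φ x)⁻¹ * muF φ u x *
        ((∑ α, LrF φ u α x * (∑ β, LrF φ u β x * pd7 (pd7 φ α) β x)) -
         ∑ β, LrF φ u β x * pd7 (cF φ) β x) := by
  intro x
  have hdp0 : Differentiable ℝ (pd7 φ 0) := (pd7_contDiff hφ 0).differentiable (by simp)
  have hdp1 : Differentiable ℝ (pd7 φ 1) := (pd7_contDiff hφ 1).differentiable (by simp)
  have hdp2 : Differentiable ℝ (pd7 φ 2) := (pd7_contDiff hφ 2).differentiable (by simp)
  have hdu0 : Differentiable ℝ (pd7 u 0) := (pd7_contDiff hu 0).differentiable (by simp)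
  have hdu1 : Differentiable ℝ (pd7 u 1) := (pd7_contDiff hu 1).differentiable (by simp)
  have hdu2 : Differentiable ℝ (pd7 u 2) := (pd7_contDiff hu 2).differentiable (by simp)
  have hcFd : cF φ = fun y => 1 + 2 * pd7 φ 0 y + (pd7 φ 1 y) ^ 2 + (pd7 φ 2 y) ^ 2 := rfl
  have hdc : Differentiable ℝ (cF φ) := by rw [hcFd]; fun_prop
  -- the denominator function
  have hsum0 : ∀ y, (∑ α, giF φ y α 0 * pd7 u α y)
      = -(pd7 u 0 y + pd7 φ 1 y * pd7 u 1 y + pd7 φ 2 y * pd7 u 2 y) := by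
    intro y
    simp [giF, Fin.sum_univ_three]
    ring
  have hSne : ∀ y, pd7 u 0 y + pd7 φ 1 y * pd7 u 1 y + pd7 φ 2 y * pd7 u 2 y ≠ 0 := by
    intro y h
    exact hden y (by rw [hsum0 y, h, neg_zero])
  have hmu : muF φ u = fun y =>
      (pd7 u 0 y + pd7 φ 1 y * pd7 u 1 y + pd7 φ 2 y * pd7 u 2 y)⁻¹ := by
    funext y
    simp only [muF]
    rw [hsum0 y, inv_neg, neg_neg]
  -- derivative of μ
  have hpdmu : ∀ β, pd7 (fun y =>
        (pd7 u 0 y + pd7 φ 1 y * pd7 u 1 y + pd7 φ 2 y * pd7 u 2 y)⁻¹) β x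
      = -((pd7 u 0 x + pd7 φ 1 x * pd7 u 1 x + pd7 φ 2 x * pd7 u 2 x) ^ 2)⁻¹ *
        (pd7 (pd7 u 0) β x + (pd7 φ 1 x * pd7 (pd7 u 1) β x + pd7 u 1 x * pd7 (pd7 φ 1) β x)
          + (pd7 φ 2 x * pd7 (pd7 u 2) β x + pd7 u 2 x * pd7 (pd7 φ 2) β x)) := by
    intro β
    rw [pd7_inv (by fun_prop) (hSne x)]
    congr 1
    simp (disch := fun_prop) only [pd7_add, pd7_mul]
  -- derivative of c
  have hpdc : ∀ β, pd7 (cF φ) β x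
      = 2 * pd7 (pd7 φ 0) β x + 2 * pd7 φ 1 x * pd7 (pd7 φ 1) β x
        + 2 * pd7 φ 2 x * pd7 (pd7 φ 2) β x := by
    intro β
    rw [hcFd]
    simp (disch := fun_prop) only [pd7_add, pd7_const_mul, pd7_sq, pd7_const]
    ring
  -- eikonal equation in compact form
  have heik' : ∀ y, cF φ y * ((pd7 u 1 y) ^ 2 + (pd7 u 2 y) ^ 2)
      - (pd7 u 0 y + pd7 φ 1 y * pd7 u 1 y + pd7 φ 2 y * pd7 u 2 y) ^ 2 = 0 := by
    intro y
    have h := heik y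
    simp [giF, Fin.sum_univ_three] at h
    linear_combination h
  have hEfun : (fun y => cF φ y * ((pd7 u 1 y) ^ 2 + (pd7 u 2 y) ^ 2)
      - (pd7 u 0 y + pd7 φ 1 y * pd7 u 1 y + pd7 φ 2 y * pd7 u 2 y) ^ 2) = (fun _ => (0:ℝ)) :=
    funext heik'
  have hEb : ∀ β, cF φ x * (2 * pd7 u 1 x * pd7 (pd7 u 1) β x + 2 * pd7 u 2 x * pd7 (pd7 u 2) β x)
      + ((pd7 u 1 x) ^ 2 + (pd7 u 2 x) ^ 2) * pd7 (cF φ) β x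
      - 2 * (pd7 u 0 x + pd7 φ 1 x * pd7 u 1 x + pd7 φ 2 x * pd7 u 2 x) *
        (pd7 (pd7 u 0) β x + (pd7 φ 1 x * pd7 (pd7 u 1) β x + pd7 u 1 x * pd7 (pd7 φ 1) β x)
          + (pd7 φ 2 x * pd7 (pd7 u 2) β x + pd7 u 2 x * pd7 (pd7 φ 2) β x)) = 0 := by
    intro β
    have h : pd7 (fun y => cF φ y * ((pd7 u 1 y) ^ 2 + (pd7 u 2 y) ^ 2)
        - (pd7 u 0 y + pd7 φ 1 y * pd7 u 1 y + pd7 φ 2 y * pd7 u 2 y) ^ 2) β x = 0 := by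
      rw [hEfun]; exact pd7_const 0
    simp (disch := fun_prop) only [pd7_sub, pd7_add, pd7_mul, pd7_sq] at h
    linear_combination h
  -- symmetry of second derivatives
  have sp10 : pd7 (pd7 φ 1) 0 x = pd7 (pd7 φ 0) 1 x := pd7_symm hφ 1 0 x
  have sp20 : pd7 (pd7 φ 2) 0 x = pd7 (pd7 φ 0) 2 x := pd7_symm hφ 2 0 x
  have sp21 : pd7 (pd7 φ 2) 1 x = pd7 (pd7 φ 1) 2 x := pd7_symm hφ 2 1 x
  have su10 : pd7 (pd7 u 1) 0 x = pd7 (pd7 u 0) 1 x := pd7_symm hu 1 0 x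
  have su20 : pd7 (pd7 u 2) 0 x = pd7 (pd7 u 0) 2 x := pd7_symm hu 2 0 x
  have su21 : pd7 (pd7 u 2) 1 x = pd7 (pd7 u 1) 2 x := pd7_symm hu 2 1 x
  have hE0 := hEb 0
  have hE1 := hEb 1
  have hE2 := hEb 2
  rw [hpdc 0] at hE0
  rw [hpdc 1] at hE1
  rw [hpdc 2] at hE2
  rw [sp10, sp20, su10, su20] at hE0
  rw [sp21, su21] at hE1
  have hkey := key7 (pd7 φ 1 x) (pd7 φ 2 x) (cF φ x)
    (pd7 u 0 x + pd7 φ 1 x * pd7 u 1 x + pd7 φ 2 x * pd7 u 2 x)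
    (pd7 u 1 x) (pd7 u 2 x)
    (pd7 (pd7 φ 0) 0 x) (pd7 (pd7 φ 0) 1 x) (pd7 (pd7 φ 0) 2 x)
    (pd7 (pd7 φ 1) 1 x) (pd7 (pd7 φ 1) 2 x) (pd7 (pd7 φ 2) 2 x)
    (pd7 (pd7 u 0) 0 x) (pd7 (pd7 u 0) 1 x) (pd7 (pd7 u 0) 2 x)
    (pd7 (pd7 u 1) 1 x) (pd7 (pd7 u 1) 2 x) (pd7 (pd7 u 2) 2 x)
    (hSne x) (hc x) (heik' x)
    (by linear_combination hE0) (by linear_combination hE1) (by linear_combination hE2)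
  -- now rewrite the goal into scalar form
  simp only [LrF, Fin.sum_univ_three, hmu, giF, Matrix.of_apply, Matrix.cons_val', Matrix.cons_val_zero,
    Matrix.cons_val_one, Matrix.head_cons, Matrix.empty_val', Matrix.cons_val_fin_one,
    Matrix.head_fin_const, Matrix.cons_val_two, Matrix.tail_cons]
  rw [hpdmu 0, hpdmu 1, hpdmu 2, hpdc 0, hpdc 1, hpdc 2]
  rw [sp10, sp20, sp21, su10, su20, su21]
  linear_combination hkey
end

section
/- Let μ>0 and suppose (t,x) ↦ (𝔱,u,ϑ) is the change of coordinates with 𝔱=t. Then the Jacobian determinant of the inverse map (𝔱,u,ϑ) → (x⁰,x¹,x²) equals μ(det g̲)^{-1/2}√(g̸_{XX}), where g̲ is the induced metric of g on the constant-time slice Σ_𝔱 and g̸_{XX}=g(X,X) with X=∂/∂ϑ. Consequently, the coordinate transformation is a local diffeomorphism wherever μ>0, det g̲>0 and g̸_{XX}>0. -/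
open Matrix

/-- Jacobian determinant of the change of coordinates `(𝔱,u,ϑ) → (x⁰,x¹,x²)`:
with the frame relations `∂/∂𝔱 = L̊`, `∂/∂u = T + ηX`, `∂/∂ϑ = X` (spatial parts
`Lsp, Tsp, Xsp`, and `T⁰ = X⁰ = 0`, `L̊⁰ = 1`), and the Gram relations
`ḡ(T,T) = μ²`, `ḡ(T,X) = 0`, `ḡ(X,X) = g̸_{XX}`, the (positively oriented)
Jacobian determinant equals `μ (det ḡ)^{-1/2} √(g̸_{XX})`; in particular the
coordinate change is a local diffeomorphism wherever `μ > 0`, `det ḡ > 0`,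
`g̸_{XX} > 0`. -/
theorem stmt13 (μ gXX η : ℝ) (Lsp Tsp Xsp : Fin 2 → ℝ)
    (gbar : Matrix (Fin 2) (Fin 2) ℝ) (hsym : gbar.IsSymm)
    (hTT : ∑ i, ∑ j, gbar i j * Tsp i * Tsp j = μ ^ 2)
    (hTX : ∑ i, ∑ j, gbar i j * Tsp i * Xsp j = 0)
    (hXX : ∑ i, ∑ j, gbar i j * Xsp i * Xsp j = gXX)
    (hμ : 0 < μ) (hdet : 0 < gbar.det) (hgXX : 0 < gXX)
    (J : Matrix (Fin 3) (Fin 3) ℝ)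
    (hJ : J = Matrix.of ![![1, 0, 0],
                          ![Lsp 0, Tsp 0 + η * Xsp 0, Xsp 0],
                          ![Lsp 1, Tsp 1 + η * Xsp 1, Xsp 1]])
    (hor : 0 ≤ J.det) :
    J.det = μ * (Real.sqrt gbar.det)⁻¹ * Real.sqrt gXX ∧ J.det ≠ 0 := by
  have hba : gbar 1 0 = gbar 0 1 := by
    have := hsym.apply 0 1
    simpa using this
  have hd : J.det = Tsp 0 * Xsp 1 - Tsp 1 * Xsp 0 := by
    subst hJ
    simp [Matrix.det_fin_three]
    ring
  simp only [Fin.sum_univ_two] at hTT hTX hXX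
  rw [hba] at hTT hTX hXX
  rw [Matrix.det_fin_two, hba] at hdet ⊢
  have hsq : J.det ^ 2 * (gbar 0 0 * gbar 1 1 - gbar 0 1 * gbar 0 1) = μ ^ 2 * gXX := by
    rw [hd]
    linear_combination
      (gbar 0 0 * Xsp 0 * Xsp 0 + gbar 0 1 * Xsp 0 * Xsp 1 + gbar 0 1 * Xsp 1 * Xsp 0 +
        gbar 1 1 * Xsp 1 * Xsp 1) * hTT + μ ^ 2 * hXX -
      (gbar 0 0 * Tsp 0 * Xsp 0 + gbar 0 1 * Tsp 0 * Xsp 1 + gbar 0 1 * Tsp 1 * Xsp 0 +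
        gbar 1 1 * Tsp 1 * Xsp 1) * hTX
  set D := gbar 0 0 * gbar 1 1 - gbar 0 1 * gbar 0 1 with hD
  have hd2 : J.det ^ 2 = (μ * (Real.sqrt D)⁻¹ * Real.sqrt gXX) ^ 2 := by
    have h1 : Real.sqrt D ^ 2 = D := Real.sq_sqrt hdet.le
    have h2 : Real.sqrt gXX ^ 2 = gXX := Real.sq_sqrt hgXX.le
    field_simp
    nlinarith [hsq]
  have hrhs : 0 ≤ μ * (Real.sqrt D)⁻¹ * Real.sqrt gXX := by positivity
  have heq : J.det = μ * (Real.sqrt D)⁻¹ * Real.sqrt gXX := by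
    rw [← Real.sqrt_sq hor, hd2, Real.sqrt_sq hrhs]
  refine ⟨heq, ?_⟩
  rw [heq]
  have : 0 < μ * (Real.sqrt D)⁻¹ * Real.sqrt gXX := by
    have := Real.sqrt_pos.mpr hdet
    have := Real.sqrt_pos.mpr hgXX
    positivity
  exact this.ne'
end

section
/- Let ψ ∈ C¹ on the region D^{𝔱,u} vanish on the outermost cone C_0 (u=0). Under the bootstrap bounds ensuring |tr⁽T⁾π̸| ≲ δ^{-ε₀} and μ ≈ 1, one has the Poincaré-type estimates with δ-gain in the transversal direction: ∫_{S_{𝔱,u}} ψ² ≲ δ ∫_{Σ_𝔱^u}(|𝔏̲ψ|² + μ²|L̊ψ|²) and ∫_{Σ_𝔱^u} ψ² ≲ δ² ∫_{Σ_𝔱^u}(|𝔏̲ψ|² + μ²|L̊ψ|²), where the u-interval has length ≤ 4δ, T = ½(𝔏̲ − μL̊), and the integrals are with respect to the induced measures. -/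
open Real

/-- Poincaré-type estimates with δ-gain in the transversal direction: for `ψ`
vanishing on the outermost cone `u' = 0`, with the transport rule for the
surface integrals, `|tr⁽T⁾π̸| ≤ C₀δ^{-ε₀}`, `T = ½(𝔏̲ − μL̊)` and `u ≤ 4δ`:
`∫_{S_{𝔱,u}}ψ² ≲ δ ∫_{Σ_𝔱^u}(|𝔏̲ψ|² + μ²|L̊ψ|²)` and
`∫_{Σ_𝔱^u}ψ² ≲ δ² ∫_{Σ_𝔱^u}(|𝔏̲ψ|² + μ²|L̊ψ|²)`. -/
theorem stmt15 (ε C0 : ℝ) (hε0 : 0 < ε) (hε1 : ε < 1) (hC0 : 0 < C0) :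
    ∃ C : ℝ, 0 < C ∧
      ∀ δ : ℝ, 0 < δ → δ ≤ 1 →
      ∀ u : ℝ, 0 ≤ u → u ≤ 4 * δ →
      ∀ ψ Tψ Lψ Lbψ a μ trπ : ℝ → ℝ → ℝ,
        Continuous (fun q : ℝ × ℝ => ψ q.1 q.2) →
        Continuous (fun q : ℝ × ℝ => Tψ q.1 q.2) →
        Continuous (fun q : ℝ × ℝ => Lψ q.1 q.2) →
        Continuous (fun q : ℝ × ℝ => Lbψ q.1 q.2) →
        Continuous (fun q : ℝ × ℝ => a q.1 q.2) →
        Continuous (fun q : ℝ × ℝ => μ q.1 q.2) →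
        Continuous (fun q : ℝ × ℝ => trπ q.1 q.2) →
        (∀ u' ϑ, 0 < a u' ϑ) →
        (∀ ϑ, ψ 0 ϑ = 0) →
        (∀ u' ϑ, Tψ u' ϑ = (Lbψ u' ϑ - μ u' ϑ * Lψ u' ϑ) / 2) →
        (∀ u' ϑ, |trπ u' ϑ| ≤ C0 * δ ^ (-ε)) →
        (∀ u' ∈ Set.Icc (0 : ℝ) u,
          HasDerivAt (fun w => ∫ ϑ in (0 : ℝ)..(2 * π), (ψ w ϑ) ^ 2 * a w ϑ)
            (∫ ϑ in (0 : ℝ)..(2 * π),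
              (2 * ψ u' ϑ * Tψ u' ϑ + trπ u' ϑ / 2 * (ψ u' ϑ) ^ 2) * a u' ϑ) u') →
        ((∫ ϑ in (0 : ℝ)..(2 * π), (ψ u ϑ) ^ 2 * a u ϑ) ≤
          C * δ * ∫ u' in (0 : ℝ)..u, ∫ ϑ in (0 : ℝ)..(2 * π),
            ((Lbψ u' ϑ) ^ 2 + (μ u' ϑ) ^ 2 * (Lψ u' ϑ) ^ 2) * a u' ϑ) ∧
        ((∫ u' in (0 : ℝ)..u, ∫ ϑ in (0 : ℝ)..(2 * π), (ψ u' ϑ) ^ 2 * a u' ϑ) ≤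
          C * δ ^ 2 * ∫ u' in (0 : ℝ)..u, ∫ ϑ in (0 : ℝ)..(2 * π),
            ((Lbψ u' ϑ) ^ 2 + (μ u' ϑ) ^ 2 * (Lψ u' ϑ) ^ 2) * a u' ϑ) := by
  refine ⟨4 * Real.exp (4 + 2 * C0), by positivity, ?_⟩
  intro δ hδ hδ1 u hu0 hu4 ψ Tψ Lψ Lbψ a μ trπ hψc hTψc hLc hLbc hac hμc hπc hapos hψ0
    hTdef hπb hF
  have hδε : (0:ℝ) < δ ^ (-ε) := Real.rpow_pos_of_pos hδ _
  set K : ℝ := 1/δ + C0 * δ ^ (-ε) / 2 with hKdef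
  have hK0 : 0 < K := by positivity
  set F : ℝ → ℝ := fun w => ∫ ϑ in (0:ℝ)..(2*π), (ψ w ϑ)^2 * a w ϑ with hFdef
  set G : ℝ → ℝ := fun w =>
    ∫ ϑ in (0:ℝ)..(2*π), ((Lbψ w ϑ)^2 + (μ w ϑ)^2 * (Lψ w ϑ)^2) * a w ϑ with hGdef
  set I : ℝ := ∫ u' in (0:ℝ)..u, G u' with hIdef
  have hπpos : (0:ℝ) ≤ 2*π := by positivity
  have hGi : Continuous (fun q : ℝ × ℝ =>
      ((Lbψ q.1 q.2)^2 + (μ q.1 q.2)^2 * (Lψ q.1 q.2)^2) * a q.1 q.2) :=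
    ((hLbc.pow 2).add ((hμc.pow 2).mul (hLc.pow 2))).mul hac
  have hFi : Continuous (fun q : ℝ × ℝ => (ψ q.1 q.2)^2 * a q.1 q.2) :=
    (hψc.pow 2).mul hac
  have hGicur : ∀ w, Continuous fun ϑ =>
      ((Lbψ w ϑ)^2 + (μ w ϑ)^2 * (Lψ w ϑ)^2) * a w ϑ :=
    fun w => hGi.comp (Continuous.prodMk_right w)
  have hGcont : Continuous G := by
    rw [hGdef]
    exact intervalIntegral.continuous_parametric_intervalIntegral_of_continuous'
      (f := fun w ϑ => ((Lbψ w ϑ)^2 + (μ w ϑ)^2 * (Lψ w ϑ)^2) * a w ϑ) hGi 0 (2*π)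
  have hFcont : Continuous F := by
    rw [hFdef]
    exact intervalIntegral.continuous_parametric_intervalIntegral_of_continuous'
      (f := fun w ϑ => (ψ w ϑ)^2 * a w ϑ) hFi 0 (2*π)
  have hGnn : ∀ w, 0 ≤ G w := by
    intro w
    exact intervalIntegral.integral_nonneg hπpos fun ϑ _ => by
      have := hapos w ϑ; positivity
  have hInn : (0:ℝ) ≤ I :=
    intervalIntegral.integral_nonneg hu0 fun w _ => hGnn w
  -- pointwise bound on the derivative integrand
  have point : ∀ w ϑ,
      (2 * ψ w ϑ * Tψ w ϑ + trπ w ϑ / 2 * (ψ w ϑ)^2) * a w ϑ ≤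
        K * ((ψ w ϑ)^2 * a w ϑ) +
          δ/2 * (((Lbψ w ϑ)^2 + (μ w ϑ)^2 * (Lψ w ϑ)^2) * a w ϑ) := by
    intro w ϑ
    have ha := hapos w ϑ
    have hπ2 := (abs_le.mp (hπb w ϑ)).2
    have hTT : (Tψ w ϑ)^2 ≤ ((Lbψ w ϑ)^2 + (μ w ϑ)^2 * (Lψ w ϑ)^2)/2 := by
      rw [hTdef]; nlinarith [sq_nonneg (Lbψ w ϑ + μ w ϑ * Lψ w ϑ)]
    have hsq : 2 * ψ w ϑ * Tψ w ϑ ≤ (ψ w ϑ)^2/δ + δ * (Tψ w ϑ)^2 := by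
      rw [← sub_nonneg]
      have hrw : (ψ w ϑ)^2/δ + δ * (Tψ w ϑ)^2 - 2 * ψ w ϑ * Tψ w ϑ
          = (ψ w ϑ - δ * Tψ w ϑ)^2 / δ := by field_simp; ring
      rw [hrw]; positivity
    have key : 2 * ψ w ϑ * Tψ w ϑ + trπ w ϑ / 2 * (ψ w ϑ)^2 ≤
        K * (ψ w ϑ)^2 + δ/2 * ((Lbψ w ϑ)^2 + (μ w ϑ)^2 * (Lψ w ϑ)^2) := by
      have h1 := mul_le_mul_of_nonneg_left hTT hδ.le
      have h2 := mul_le_mul_of_nonneg_right hπ2 (sq_nonneg (ψ w ϑ))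
      rw [hKdef]
      have e : (1/δ + C0 * δ ^ (-ε) / 2) * (ψ w ϑ)^2
          = (ψ w ϑ)^2/δ + C0 * δ ^ (-ε) / 2 * (ψ w ϑ)^2 := by ring
      rw [e]; linarith
    calc (2 * ψ w ϑ * Tψ w ϑ + trπ w ϑ / 2 * (ψ w ϑ)^2) * a w ϑ
        ≤ (K * (ψ w ϑ)^2 + δ/2 * ((Lbψ w ϑ)^2 + (μ w ϑ)^2 * (Lψ w ϑ)^2)) * a w ϑ :=
          mul_le_mul_of_nonneg_right key ha.le
      _ = K * ((ψ w ϑ)^2 * a w ϑ) +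
          δ/2 * (((Lbψ w ϑ)^2 + (μ w ϑ)^2 * (Lψ w ϑ)^2) * a w ϑ) := by ring
  -- integrated derivative bound
  have hF'le : ∀ t ∈ Set.Icc (0:ℝ) u,
      (∫ ϑ in (0:ℝ)..(2*π),
        (2 * ψ t ϑ * Tψ t ϑ + trπ t ϑ / 2 * (ψ t ϑ)^2) * a t ϑ) ≤
      K * F t + δ/2 * G t := by
    intro t _
    have hint1 : IntervalIntegrable
        (fun ϑ => (2 * ψ t ϑ * Tψ t ϑ + trπ t ϑ / 2 * (ψ t ϑ)^2) * a t ϑ)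
        MeasureTheory.volume 0 (2*π) := by
      apply Continuous.intervalIntegrable
      exact ((((continuous_const.mul (hψc.comp (Continuous.prodMk_right t))).mul
        (hTψc.comp (Continuous.prodMk_right t))).add
        (((hπc.comp (Continuous.prodMk_right t)).div_const 2).mul
          ((hψc.comp (Continuous.prodMk_right t)).pow 2))).mul
        (hac.comp (Continuous.prodMk_right t)))
    have hint2a : IntervalIntegrable (fun ϑ => K * ((ψ t ϑ)^2 * a t ϑ))
        MeasureTheory.volume 0 (2*π) :=
      (continuous_const.mul (hFi.comp (Continuous.prodMk_right t))).intervalIntegrable _ _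
    have hint2b : IntervalIntegrable
        (fun ϑ => δ/2 * (((Lbψ t ϑ)^2 + (μ t ϑ)^2 * (Lψ t ϑ)^2) * a t ϑ))
        MeasureTheory.volume 0 (2*π) :=
      (continuous_const.mul (hGicur t)).intervalIntegrable _ _
    calc (∫ ϑ in (0:ℝ)..(2*π),
        (2 * ψ t ϑ * Tψ t ϑ + trπ t ϑ / 2 * (ψ t ϑ)^2) * a t ϑ)
        ≤ ∫ ϑ in (0:ℝ)..(2*π), (K * ((ψ t ϑ)^2 * a t ϑ) +
            δ/2 * (((Lbψ t ϑ)^2 + (μ t ϑ)^2 * (Lψ t ϑ)^2) * a t ϑ)) :=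
          intervalIntegral.integral_mono_on hπpos hint1 (hint2a.add hint2b)
            fun ϑ _ => point t ϑ
      _ = K * F t + δ/2 * G t := by
          rw [intervalIntegral.integral_add hint2a hint2b,
            intervalIntegral.integral_const_mul, intervalIntegral.integral_const_mul]
  -- the auxiliary function Φ and its derivative
  set Φ : ℝ → ℝ := fun t =>
    Real.exp (-K*t) * F t - δ/2 * ∫ s in (0:ℝ)..t, Real.exp (-K*s) * G s with hΦdef
  have hEGcont : Continuous fun s => Real.exp (-K*s) * G s :=
    (Real.continuous_exp.comp (continuous_const.mul continuous_id)).mul hGcont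
  have hΦderiv : ∀ t ∈ Set.Icc (0:ℝ) u, HasDerivAt Φ
      ((Real.exp (-K*t) * (-K*1)) * F t +
        Real.exp (-K*t) * (∫ ϑ in (0:ℝ)..(2*π),
          (2 * ψ t ϑ * Tψ t ϑ + trπ t ϑ / 2 * (ψ t ϑ)^2) * a t ϑ) -
        δ/2 * (Real.exp (-K*t) * G t)) t := by
    intro t ht
    have h1 : HasDerivAt (fun t => Real.exp (-K*t)) (Real.exp (-K*t) * (-K*1)) t :=
      ((hasDerivAt_id t).const_mul (-K)).exp
    have h3 : HasDerivAt (fun t => ∫ s in (0:ℝ)..t, Real.exp (-K*s) * G s)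
        (Real.exp (-K*t) * G t) t :=
      (hEGcont.integral_hasStrictDerivAt 0 t).hasDerivAt
    exact (h1.mul (hF t ht)).sub (h3.const_mul (δ/2))
  have hΦcont : Continuous Φ := by
    apply Continuous.sub
    · exact (Real.continuous_exp.comp (continuous_const.mul continuous_id)).mul hFcont
    · apply continuous_const.mul
      exact continuous_iff_continuousAt.mpr fun t =>
        (hEGcont.integral_hasStrictDerivAt 0 t).hasDerivAt.continuousAt
  have hΦmono : AntitoneOn Φ (Set.Icc 0 u) := by
    apply antitoneOn_of_deriv_nonpos (convex_Icc 0 u) hΦcont.continuousOn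
    · intro x hx
      rw [interior_Icc] at hx
      exact ((hΦderiv x (Set.Ioo_subset_Icc_self hx)).differentiableAt).differentiableWithinAt
    · intro x hx
      rw [interior_Icc] at hx
      have hx' := Set.Ioo_subset_Icc_self hx
      rw [(hΦderiv x hx').deriv]
      have hb := sub_nonpos.mpr (hF'le x hx')
      have : (Real.exp (-K*x) * (-K*1)) * F x +
          Real.exp (-K*x) * (∫ ϑ in (0:ℝ)..(2*π),
            (2 * ψ x ϑ * Tψ x ϑ + trπ x ϑ / 2 * (ψ x ϑ)^2) * a x ϑ) -
          δ/2 * (Real.exp (-K*x) * G x) =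
          Real.exp (-K*x) * ((∫ ϑ in (0:ℝ)..(2*π),
            (2 * ψ x ϑ * Tψ x ϑ + trπ x ϑ / 2 * (ψ x ϑ)^2) * a x ϑ) -
            (K * F x + δ/2 * G x)) := by ring
      rw [this]
      exact mul_nonpos_of_nonneg_of_nonpos (Real.exp_pos _).le hb
  have hF0 : F 0 = 0 := by
    rw [hFdef]; simp [hψ0]
  have hΦ0 : Φ 0 = 0 := by
    rw [hΦdef]; simp [hF0]
  -- K * t ≤ 4 + 2C0 on [0, u]
  have hδe : δ ^ (-ε) * δ ≤ 1 := by
    have h1 : δ ^ (-ε) * δ = δ ^ (-ε + 1) := by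
      rw [Real.rpow_add_one hδ.ne' (-ε)]
    rw [h1]
    exact Real.rpow_le_one hδ.le hδ1 (by linarith)
  have hKt : ∀ t ∈ Set.Icc (0:ℝ) u, K * t ≤ 4 + 2 * C0 := by
    intro t ht
    have h1 : t ≤ 4 * δ := le_trans ht.2 hu4
    have e1 : (1/δ) * t ≤ 4 := by
      rw [one_div, inv_mul_le_iff₀ hδ]; linarith
    have e2 : (C0 * δ ^ (-ε) / 2) * t ≤ 2 * C0 := by
      have h2 : (C0 * δ ^ (-ε) / 2) * t ≤ (C0 * δ ^ (-ε) / 2) * (4 * δ) :=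
        mul_le_mul_of_nonneg_left h1 (by positivity)
      have h3 : (C0 * δ ^ (-ε) / 2) * (4 * δ) = 2 * C0 * (δ ^ (-ε) * δ) := by ring
      have h4 : 2 * C0 * (δ ^ (-ε) * δ) ≤ 2 * C0 * 1 :=
        mul_le_mul_of_nonneg_left hδe (by positivity)
      linarith
    rw [hKdef]; nlinarith
  -- main pointwise-in-t bound
  have hmain : ∀ t ∈ Set.Icc (0:ℝ) u, F t ≤ Real.exp (4 + 2*C0) * (δ/2 * I) := by
    intro t ht
    have hΦt : Φ t ≤ Φ 0 := hΦmono (Set.left_mem_Icc.mpr hu0) ht ht.1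
    rw [hΦ0] at hΦt
    have hstep : Real.exp (-K*t) * F t ≤ δ/2 * ∫ s in (0:ℝ)..t, Real.exp (-K*s) * G s := by
      have := hΦt
      rw [hΦdef] at this
      simpa using sub_nonpos.mp this
    have hle1 : (∫ s in (0:ℝ)..t, Real.exp (-K*s) * G s) ≤ ∫ s in (0:ℝ)..t, G s := by
      apply intervalIntegral.integral_mono_on ht.1
        (hEGcont.intervalIntegrable _ _) (hGcont.intervalIntegrable _ _)
      intro s hs
      have h1 : Real.exp (-K*s) ≤ 1 := by
        rw [Real.exp_le_one_iff]
        have := mul_nonneg hK0.le hs.1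
        linarith
      exact mul_le_of_le_one_left (hGnn s) h1
    have hle2 : (∫ s in (0:ℝ)..t, G s) ≤ I := by
      rw [hIdef]
      exact intervalIntegral.integral_mono_interval le_rfl ht.1 ht.2
        (Filter.Eventually.of_forall fun s => hGnn s) (hGcont.intervalIntegrable _ _)
    have hstep2 : Real.exp (-K*t) * F t ≤ δ/2 * I := by
      have := mul_le_mul_of_nonneg_left (le_trans hle1 hle2) (by positivity : (0:ℝ) ≤ δ/2)
      linarith
    have hFt : F t ≤ Real.exp (K*t) * (δ/2 * I) := by
      have h2 := mul_le_mul_of_nonneg_left hstep2 (Real.exp_pos (K*t)).le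
      calc F t = Real.exp (K*t) * (Real.exp (-K*t) * F t) := by
            rw [← mul_assoc, ← Real.exp_add]; simp
        _ ≤ Real.exp (K*t) * (δ/2 * I) := h2
    calc F t ≤ Real.exp (K*t) * (δ/2 * I) := hFt
      _ ≤ Real.exp (4 + 2*C0) * (δ/2 * I) :=
        mul_le_mul_of_nonneg_right (Real.exp_le_exp.mpr (hKt t ht)) (by positivity)
  have goal1 : F u ≤ 4 * Real.exp (4 + 2 * C0) * δ * I := by
    have h1 := hmain u (Set.right_mem_Icc.mpr hu0)
    have h2 : (0:ℝ) ≤ Real.exp (4 + 2*C0) * (δ * I) :=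
      mul_nonneg (Real.exp_pos _).le (mul_nonneg hδ.le hInn)
    nlinarith
  have goal2 : (∫ u' in (0:ℝ)..u, F u') ≤ 4 * Real.exp (4 + 2 * C0) * δ^2 * I := by
    have h1 : (∫ u' in (0:ℝ)..u, F u') ≤ ∫ u' in (0:ℝ)..u,
        Real.exp (4 + 2*C0) * (δ/2 * I) :=
      intervalIntegral.integral_mono_on hu0 (hFcont.intervalIntegrable _ _)
        (intervalIntegrable_const) hmain
    have h2 : (∫ u' in (0:ℝ)..u, Real.exp (4 + 2*C0) * (δ/2 * I)) =
        u * (Real.exp (4 + 2*C0) * (δ/2 * I)) := by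
      rw [intervalIntegral.integral_const, smul_eq_mul, sub_zero]
    rw [h2] at h1
    have hB : (0:ℝ) ≤ Real.exp (4 + 2*C0) * (δ/2 * I) := by positivity
    have h4 : u * (Real.exp (4 + 2*C0) * (δ/2 * I)) ≤
        (4*δ) * (Real.exp (4 + 2*C0) * (δ/2 * I)) :=
      mul_le_mul_of_nonneg_right hu4 hB
    nlinarith [mul_nonneg (Real.exp_pos (4 + 2*C0)).le
      (mul_nonneg (mul_nonneg hδ.le hδ.le) hInn)]
  constructor
  · simpa only [hFdef, hGdef, hIdef] using goal1
  · simpa only [hFdef, hGdef, hIdef] using goal2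
end

section
/- Weighted L² trace-type inequality in 2D: for f ∈ C^∞(ℝ^{1+2}), t ≥ 1, and 1 ≤ t̄ ≤ t−2δ, one has ‖f(t,·)/(1+t−|·|)‖_{L²(t̄≤|x|≤t−2δ)} ≲ t^{1/2}‖f(t,B_t^·)‖_{L^∞(t̄≤|x|≤t−2δ)} + ‖∂f(t,·)‖_{L²(t̄≤|x|≤t−2δ)}, where B_t^x = (t−2δ)x/|x| and ∂ = (∂_t,∂_1,∂_2). -/
open MeasureTheory Set Real

/-- `∂_t f`. -/
noncomputable def pdt (f : ℝ × ℝ × ℝ → ℝ) (p : ℝ × ℝ × ℝ) : ℝ := fderiv ℝ f p (1, 0, 0)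
/-- `∂_1 f`. -/
noncomputable def pd1 (f : ℝ × ℝ × ℝ → ℝ) (p : ℝ × ℝ × ℝ) : ℝ := fderiv ℝ f p (0, 1, 0)
/-- `∂_2 f`. -/
noncomputable def pd2 (f : ℝ × ℝ × ℝ → ℝ) (p : ℝ × ℝ × ℝ) : ℝ := fderiv ℝ f p (0, 0, 1)


lemma hardy1d (a R t M : ℝ) (h1a : 1 ≤ a) (haR : a ≤ R) (hRt : R ≤ t) (hM : 0 ≤ M)
    (F F' : ℝ → ℝ) (hF : ∀ r, HasDerivAt F (F' r) r) (hFc : Continuous F')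
    (hFR : |F R| ≤ M) :
    ∫ r in a..R, r * (F r / (1 + t - r)) ^ 2 ≤
      2 * t * M ^ 2 + 4 * ∫ r in a..R, r * (F' r) ^ 2 := by
  have hFcont : Continuous F := continuous_iff_continuousAt.2 fun x => (hF x).differentiableAt.continuousAt
  have hu : ∀ r ∈ Icc a R, (0:ℝ) < 1 + t - r := fun r hr => by
    have := hr.2; linarith
  have hne : ∀ r ∈ Icc a R, (1 + t - r) ≠ 0 := fun r hr => (hu r hr).ne'
  set g' : ℝ → ℝ := fun r => 2 * F r * F' r * (r / (1 + t - r)) +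
      F r ^ 2 * ((1 + t) / (1 + t - r) ^ 2) with hg'
  have hdenom : Continuous (fun r : ℝ => 1 + t - r) := by continuity
  have hderiv : ∀ r ∈ uIcc a R,
      HasDerivAt (fun r => F r ^ 2 * (r / (1 + t - r))) (g' r) r := by
    intro r hr
    rw [uIcc_of_le haR] at hr
    have hur : (1 + t - r) ≠ 0 := hne r hr
    have h1 : HasDerivAt (fun r : ℝ => r / (1 + t - r)) ((1 + t) / (1 + t - r) ^ 2) r := by
      have h := (hasDerivAt_id r).div ((hasDerivAt_id r).const_sub (1 + t)) hur
      refine h.congr_deriv ?_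
      simp only [id_eq]; congr 1; ring
    have h2 : HasDerivAt (fun r => F r ^ 2) (2 * F r * F' r) r := by
      have h := (hF r).pow 2
      refine h.congr_deriv ?_
      norm_num
    exact h2.mul h1
  have hcontg' : ContinuousOn g' (Icc a R) := by
    apply ContinuousOn.add
    · exact ((continuous_const.mul hFcont).mul hFc).continuousOn.mul
        (continuousOn_id.div hdenom.continuousOn hne)
    · exact (hFcont.pow 2).continuousOn.mul
        (continuousOn_const.div (hdenom.pow 2).continuousOn
          (fun r hr => pow_ne_zero 2 (hne r hr)))
  have hg'int : IntervalIntegrable g' volume a R := by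
    apply ContinuousOn.intervalIntegrable
    rwa [uIcc_of_le haR]
  have hFTC : ∫ r in a..R, g' r =
      F R ^ 2 * (R / (1 + t - R)) - F a ^ 2 * (a / (1 + t - a)) :=
    intervalIntegral.integral_eq_sub_of_hasDerivAt hderiv hg'int
  have hXint : IntervalIntegrable (fun r => r * (F r / (1 + t - r)) ^ 2) volume a R := by
    apply ContinuousOn.intervalIntegrable
    rw [uIcc_of_le haR]
    exact continuousOn_id.mul
      ((hFcont.continuousOn.div hdenom.continuousOn hne).pow 2)
  have hYint : IntervalIntegrable (fun r => r * (F' r) ^ 2) volume a R :=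
    (continuous_id.mul (hFc.pow 2)).intervalIntegrable _ _
  have ptwise : ∀ r ∈ Icc a R, r * (F r / (1 + t - r)) ^ 2 ≤
      g' r + ((1/2) * (r * (F r / (1 + t - r)) ^ 2) + 2 * (r * (F' r) ^ 2)) := by
    intro r hr
    have hu0 : 0 < 1 + t - r := hu r hr
    have hune : (1 + t - r) ≠ 0 := hu0.ne'
    have hr0 : (0:ℝ) ≤ r := by linarith [hr.1]
    have hrt : r ≤ 1 + t := by linarith [hr.2]
    have key : r * F r ^ 2 ≤ (2 * F r * F' r * r * (1 + t - r) + F r ^ 2 * (1 + t)) +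
        ((1/2) * (r * F r ^ 2) + 2 * (r * F' r ^ 2 * (1 + t - r) ^ 2)) := by
      nlinarith [mul_nonneg hr0 (sq_nonneg (F r + 2 * F' r * (1 + t - r))),
        mul_nonneg (sq_nonneg (F r)) (sub_nonneg.2 hrt)]
    calc r * (F r / (1 + t - r)) ^ 2 = (r * F r ^ 2) / (1 + t - r) ^ 2 := by
          rw [div_pow, mul_div_assoc]
      _ ≤ ((2 * F r * F' r * r * (1 + t - r) + F r ^ 2 * (1 + t)) +
            ((1/2) * (r * F r ^ 2) + 2 * (r * F' r ^ 2 * (1 + t - r) ^ 2))) /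
              (1 + t - r) ^ 2 := by gcongr
      _ = g' r + ((1/2) * (r * (F r / (1 + t - r)) ^ 2) + 2 * (r * (F' r) ^ 2)) := by
          simp only [hg']
          field_simp
  have hmono := intervalIntegral.integral_mono_on haR hXint
    (hg'int.add ((hXint.const_mul (1/2)).add (hYint.const_mul 2))) ptwise
  rw [intervalIntegral.integral_add hg'int ((hXint.const_mul (1/2)).add (hYint.const_mul 2)),
    intervalIntegral.integral_add (hXint.const_mul (1/2)) (hYint.const_mul 2),
    intervalIntegral.integral_const_mul, intervalIntegral.integral_const_mul, hFTC] at hmono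
  have hwa : 0 ≤ F a ^ 2 * (a / (1 + t - a)) :=
    mul_nonneg (sq_nonneg _) (div_nonneg (by linarith) (hu a ⟨le_refl _, haR⟩).le)
  have hFR2 : F R ^ 2 ≤ M ^ 2 := by
    have := sq_abs (F R)
    nlinarith [abs_nonneg (F R)]
  have hwR : F R ^ 2 * (R / (1 + t - R)) ≤ t * M ^ 2 := by
    have h1 : R / (1 + t - R) ≤ R := div_le_self (by linarith) (by linarith)
    have h2 : F R ^ 2 * (R / (1 + t - R)) ≤ M ^ 2 * R := by
      apply mul_le_mul hFR2 h1 (div_nonneg (by linarith) (by linarith)) (sq_nonneg M)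
    nlinarith [sq_nonneg M]
  linarith


lemma polar_annulus (q : ℝ × ℝ → ℝ) (a R : ℝ) (h0a : 0 < a) (haR : a ≤ R)
    (hcont : ContinuousOn (fun z : ℝ × ℝ => z.1 * q (z.1 * Real.cos z.2, z.1 * Real.sin z.2))
      (Set.Icc a R ×ˢ Set.Icc (-π) π)) :
    ∫ y in {y : ℝ × ℝ | a ^ 2 ≤ y.1 ^ 2 + y.2 ^ 2 ∧ y.1 ^ 2 + y.2 ^ 2 ≤ R ^ 2}, q y
      = ∫ θ in Set.Ioo (-π) π, ∫ r in Set.Icc a R,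
          r * q (r * Real.cos θ, r * Real.sin θ) := by
  set A : Set (ℝ × ℝ) := {y : ℝ × ℝ | a ^ 2 ≤ y.1 ^ 2 + y.2 ^ 2 ∧ y.1 ^ 2 + y.2 ^ 2 ≤ R ^ 2}
    with hAdef
  have hA : MeasurableSet A := by
    apply MeasurableSet.inter
    · exact measurableSet_le measurable_const
        ((measurable_fst.pow_const 2).add (measurable_snd.pow_const 2))
    · exact measurableSet_le
        ((measurable_fst.pow_const 2).add (measurable_snd.pow_const 2)) measurable_const
  set h : ℝ × ℝ → ℝ := fun z => z.1 * q (z.1 * Real.cos z.2, z.1 * Real.sin z.2) with hhdef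
  set S : Set (ℝ × ℝ) := Set.Icc a R ×ˢ Set.Ioo (-π) π with hSdef
  have hS : MeasurableSet S := measurableSet_Icc.prod measurableSet_Ioo
  have step1 : ∫ y in A, q y = ∫ p in polarCoord.target, p.1 • (A.indicator q) (polarCoord.symm p) := by
    rw [← integral_indicator hA, ← integral_comp_polarCoord_symm]
  have step2 : ∫ p in polarCoord.target, p.1 • (A.indicator q) (polarCoord.symm p)
      = ∫ p in polarCoord.target, S.indicator h p := by
    apply setIntegral_congr_fun polarCoord.open_target.measurableSet
    rintro ⟨r, θ⟩ hp
    have hp1 : 0 < r := hp.1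
    have hθ : θ ∈ Set.Ioo (-π) π := hp.2
    have hsymm : polarCoord.symm (r, θ) = (r * Real.cos θ, r * Real.sin θ) := rfl
    have hsq : (r * Real.cos θ) ^ 2 + (r * Real.sin θ) ^ 2 = r ^ 2 := by
      have := Real.sin_sq_add_cos_sq θ; nlinarith
    by_cases hr : r ∈ Set.Icc a R
    · have hmemA : ((r * Real.cos θ, r * Real.sin θ) : ℝ × ℝ) ∈ A := by
        constructor
        · show a ^ 2 ≤ _
          rw [hsq]; nlinarith [hr.1]
        · show _ ≤ R ^ 2
          rw [hsq]; nlinarith [hr.2, h0a.le.trans hr.1]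
      have hmemS : ((r, θ) : ℝ × ℝ) ∈ S := ⟨hr, hθ⟩
      simp only [Set.indicator_of_mem hmemA, Set.indicator_of_mem hmemS, hsymm,
        smul_eq_mul, hhdef]
    · have hmemA : ((r * Real.cos θ, r * Real.sin θ) : ℝ × ℝ) ∉ A := by
        intro hmem
        obtain ⟨h1, h2⟩ := hmem
        dsimp only at h1 h2
        apply hr
        constructor
        · nlinarith [hsq, h0a]
        · nlinarith [hsq, h0a, haR]
      have hmemS : ((r, θ) : ℝ × ℝ) ∉ S := fun hmem => hr hmem.1
      simp only [hsymm, Set.indicator_of_notMem hmemA, Set.indicator_of_notMem hmemS,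
        smul_zero]
  have hsub : S ⊆ polarCoord.target := by
    apply Set.prod_mono_left
    intro x hx
    exact lt_of_lt_of_le h0a hx.1
  have step3 : ∫ p in polarCoord.target, S.indicator h p = ∫ p in S, h p := by
    rw [setIntegral_indicator hS, Set.inter_eq_self_of_subset_right hsub]
  have hint : IntegrableOn h S (volume : Measure (ℝ × ℝ)) := by
    apply IntegrableOn.mono_set (hcont.integrableOn_compact (isCompact_Icc.prod isCompact_Icc))
    exact Set.prod_mono_right Set.Ioo_subset_Icc_self
  have step4 : ∫ p in S, h p = ∫ θ in Set.Ioo (-π) π, ∫ r in Set.Icc a R, h (r, θ) := by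
    rw [hSdef, Measure.volume_eq_prod, ← Measure.prod_restrict]
    apply integral_prod_symm
    rw [Measure.prod_restrict]
    rw [Measure.volume_eq_prod] at hint
    exact hint
  rw [step1, step2, step3, step4]

set_option maxHeartbeats 1000000 in
/-- Weighted `L²` trace-type (Hardy) inequality in 2D: for `1 ≤ t̄ ≤ t − 2δ`,
`‖f(t,·)/(1+t−|·|)‖_{L²(t̄≤|x|≤t−2δ)} ≲ t^{1/2}‖f(t,B_t^·)‖_{L^∞} + ‖∂f(t,·)‖_{L²}`,
where `B_t^x = (t−2δ)x/|x|` and `∂ = (∂_t,∂_1,∂_2)`. -/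
theorem stmt18 :
    ∃ C : ℝ, 0 < C ∧ ∀ f : ℝ × ℝ × ℝ → ℝ, ContDiff ℝ (⊤ : ℕ∞) f →
      ∀ t δ tbar M : ℝ, 1 ≤ t → 0 < δ → 1 ≤ tbar → tbar ≤ t - 2 * δ → 0 ≤ M →
      (∀ y : ℝ × ℝ, tbar ^ 2 ≤ y.1 ^ 2 + y.2 ^ 2 → y.1 ^ 2 + y.2 ^ 2 ≤ (t - 2 * δ) ^ 2 →
        |f (t, (t - 2 * δ) / Real.sqrt (y.1 ^ 2 + y.2 ^ 2) * y.1,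
              (t - 2 * δ) / Real.sqrt (y.1 ^ 2 + y.2 ^ 2) * y.2)| ≤ M) →
      Real.sqrt (∫ y in {y : ℝ × ℝ |
          tbar ^ 2 ≤ y.1 ^ 2 + y.2 ^ 2 ∧ y.1 ^ 2 + y.2 ^ 2 ≤ (t - 2 * δ) ^ 2},
        (f (t, y.1, y.2) / (1 + t - Real.sqrt (y.1 ^ 2 + y.2 ^ 2))) ^ 2) ≤
      C * (t ^ ((1 : ℝ) / 2) * M +
        Real.sqrt (∫ y in {y : ℝ × ℝ |
            tbar ^ 2 ≤ y.1 ^ 2 + y.2 ^ 2 ∧ y.1 ^ 2 + y.2 ^ 2 ≤ (t - 2 * δ) ^ 2},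
          ((pdt f (t, y.1, y.2)) ^ 2 + (pd1 f (t, y.1, y.2)) ^ 2 +
           (pd2 f (t, y.1, y.2)) ^ 2))) := by
  refine ⟨4, by norm_num, ?_⟩
  intro f hf t δ tbar M ht hδ htbar htR hM hbd
  set a : ℝ := tbar with ha
  set R : ℝ := t - 2 * δ with hR
  have h1a : 1 ≤ a := htbar
  have haR : a ≤ R := htR
  have hRt : R ≤ t := by rw [hR]; linarith
  have h0a : 0 < a := lt_of_lt_of_le one_pos h1a
  have h0R : 0 < R := lt_of_lt_of_le h0a haR
  set p : ℝ × ℝ → ℝ :=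
    fun y => (f (t, y.1, y.2) / (1 + t - Real.sqrt (y.1 ^ 2 + y.2 ^ 2))) ^ 2 with hp
  set Gf : ℝ × ℝ → ℝ := fun y => (pdt f (t, y.1, y.2)) ^ 2 + (pd1 f (t, y.1, y.2)) ^ 2 +
      (pd2 f (t, y.1, y.2)) ^ 2 with hGf
  set A : Set (ℝ × ℝ) :=
    {y : ℝ × ℝ | a ^ 2 ≤ y.1 ^ 2 + y.2 ^ 2 ∧ y.1 ^ 2 + y.2 ^ 2 ≤ R ^ 2} with hAdef
  have hA : MeasurableSet A := by
    apply MeasurableSet.inter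
    · exact measurableSet_le measurable_const
        ((measurable_fst.pow_const 2).add (measurable_snd.pow_const 2))
    · exact measurableSet_le
        ((measurable_fst.pow_const 2).add (measurable_snd.pow_const 2)) measurable_const
  -- continuity facts
  have hfc : Continuous f := hf.continuous
  have hfd : Differentiable ℝ f := hf.differentiable (by simp)
  have hfderiv : Continuous (fun q : ℝ × ℝ × ℝ => fderiv ℝ f q) := hf.continuous_fderiv (by simp)
  have hpdt : Continuous (pdt f) := hfderiv.clm_apply continuous_const
  have hpd1 : Continuous (pd1 f) := hfderiv.clm_apply continuous_const
  have hpd2 : Continuous (pd2 f) := hfderiv.clm_apply continuous_const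
  have hcurvec : ∀ θ : ℝ, Continuous (fun r : ℝ => ((t, r * Real.cos θ, r * Real.sin θ) : ℝ × ℝ × ℝ)) := by
    intro θ; fun_prop
  -- sqrt computation
  have hsqrt : ∀ θ r : ℝ, 0 ≤ r →
      Real.sqrt ((r * Real.cos θ) ^ 2 + (r * Real.sin θ) ^ 2) = r := by
    intro θ r hr0
    rw [show (r * Real.cos θ) ^ 2 + (r * Real.sin θ) ^ 2 = r ^ 2 by
      nlinarith [Real.sin_sq_add_cos_sq θ], Real.sqrt_sq hr0]
  -- polar transforms
  have hcontP : ContinuousOn (fun z : ℝ × ℝ => z.1 * p (z.1 * Real.cos z.2, z.1 * Real.sin z.2))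
      (Set.Icc a R ×ˢ Set.Icc (-π) π) := by
    apply ContinuousOn.mul continuousOn_fst
    apply ContinuousOn.pow
    apply ContinuousOn.div
    · exact (hfc.comp (by fun_prop : Continuous (fun z : ℝ × ℝ =>
        ((t, z.1 * Real.cos z.2, z.1 * Real.sin z.2) : ℝ × ℝ × ℝ)))).continuousOn
    · exact (continuous_const.sub ((by fun_prop : Continuous (fun z : ℝ × ℝ =>
        (z.1 * Real.cos z.2) ^ 2 + (z.1 * Real.sin z.2) ^ 2)).sqrt)).continuousOn
    · intro z hz
      have hz1 : z.1 ∈ Set.Icc a R := hz.1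
      rw [hsqrt z.2 z.1 (le_trans h0a.le hz1.1)]
      have := hz1.2
      simp only [hR] at this ⊢
      linarith [hz1.2]
  have hcontG : ContinuousOn (fun z : ℝ × ℝ => z.1 * Gf (z.1 * Real.cos z.2, z.1 * Real.sin z.2))
      (Set.Icc a R ×ˢ Set.Icc (-π) π) := by
    apply Continuous.continuousOn
    fun_prop
  -- derivative of the radial restriction
  have hFderiv : ∀ θ r : ℝ, HasDerivAt (fun r => f (t, r * Real.cos θ, r * Real.sin θ))
      (Real.cos θ * pd1 f (t, r * Real.cos θ, r * Real.sin θ) +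
       Real.sin θ * pd2 f (t, r * Real.cos θ, r * Real.sin θ)) r := by
    intro θ r
    have hcurve : HasDerivAt (fun r : ℝ => ((t, r * Real.cos θ, r * Real.sin θ) : ℝ × ℝ × ℝ))
        ((0, Real.cos θ, Real.sin θ) : ℝ × ℝ × ℝ) r :=
      (hasDerivAt_const r t).prodMk
        ((hasDerivAt_mul_const (Real.cos θ)).prodMk (hasDerivAt_mul_const (Real.sin θ)))
    have hcomp := (hfd _).hasFDerivAt.comp_hasDerivAt r hcurve
    refine hcomp.congr_deriv ?_
    have hvec : ((0, Real.cos θ, Real.sin θ) : ℝ × ℝ × ℝ) =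
        Real.cos θ • ((0:ℝ), (1:ℝ), (0:ℝ)) + Real.sin θ • ((0:ℝ), (0:ℝ), (1:ℝ)) := by
      simp [Prod.ext_iff]
    rw [hvec, map_add, ContinuousLinearMap.map_smul, ContinuousLinearMap.map_smul,
      smul_eq_mul, smul_eq_mul]
    rfl
  -- per-angle Hardy inequality
  have hperθ : ∀ θ ∈ Set.Ioo (-π) π,
      (∫ r in Set.Icc a R, r * p (r * Real.cos θ, r * Real.sin θ)) ≤
        2 * t * M ^ 2 + 4 * ∫ r in Set.Icc a R, r * Gf (r * Real.cos θ, r * Real.sin θ) := by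
    intro θ _
    set F : ℝ → ℝ := fun r => f (t, r * Real.cos θ, r * Real.sin θ) with hFdef
    set F' : ℝ → ℝ := fun r => Real.cos θ * pd1 f (t, r * Real.cos θ, r * Real.sin θ) +
        Real.sin θ * pd2 f (t, r * Real.cos θ, r * Real.sin θ) with hF'def
    have hF'c : Continuous F' := by fun_prop
    have hFR : |F R| ≤ M := by
      have hRR : (R * Real.cos θ) ^ 2 + (R * Real.sin θ) ^ 2 = R ^ 2 := by
        nlinarith [Real.sin_sq_add_cos_sq θ]
      have h1 : a ^ 2 ≤ (R * Real.cos θ) ^ 2 + (R * Real.sin θ) ^ 2 := by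
        rw [hRR]; exact pow_le_pow_left₀ h0a.le haR 2
      have h2 : (R * Real.cos θ) ^ 2 + (R * Real.sin θ) ^ 2 ≤ R ^ 2 := le_of_eq hRR
      have hb := hbd (R * Real.cos θ, R * Real.sin θ) h1 h2
      dsimp only at hb
      rw [hRR, Real.sqrt_sq h0R.le,
        div_self h0R.ne', one_mul, one_mul] at hb
      exact hb
    have hIccP : (∫ r in Set.Icc a R, r * p (r * Real.cos θ, r * Real.sin θ)) =
        ∫ r in a..R, r * (F r / (1 + t - r)) ^ 2 := by
      rw [intervalIntegral.integral_of_le haR, ← integral_Icc_eq_integral_Ioc]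
      apply setIntegral_congr_fun measurableSet_Icc
      intro r hr
      simp only [hp, hFdef]
      rw [hsqrt θ r (le_trans h0a.le hr.1)]
    have hIccG : (∫ r in Set.Icc a R, r * Gf (r * Real.cos θ, r * Real.sin θ)) =
        ∫ r in a..R, r * Gf (r * Real.cos θ, r * Real.sin θ) := by
      rw [intervalIntegral.integral_of_le haR, integral_Icc_eq_integral_Ioc]
    rw [hIccP, hIccG]
    have h1d := hardy1d a R t M h1a haR hRt hM F F' (hFderiv θ) hF'c hFR
    refine le_trans h1d ?_
    have hGcont : Continuous (fun r : ℝ => r * Gf (r * Real.cos θ, r * Real.sin θ)) := by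
      fun_prop
    have hmono2 : (∫ r in a..R, r * (F' r) ^ 2) ≤
        ∫ r in a..R, r * Gf (r * Real.cos θ, r * Real.sin θ) := by
      apply intervalIntegral.integral_mono_on haR
      · exact (continuous_id.mul (hF'c.pow 2)).intervalIntegrable _ _
      · exact hGcont.intervalIntegrable _ _
      · intro r hr
        have hr0 : (0:ℝ) ≤ r := le_trans h0a.le hr.1
        simp only [hGf, hF'def]
        apply mul_le_mul_of_nonneg_left _ hr0
        nlinarith [Real.sin_sq_add_cos_sq θ,
          sq_nonneg (Real.sin θ * pd1 f (t, r * Real.cos θ, r * Real.sin θ) -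
            Real.cos θ * pd2 f (t, r * Real.cos θ, r * Real.sin θ)),
          sq_nonneg (pdt f (t, r * Real.cos θ, r * Real.sin θ))]
    linarith
  -- polar transforms
  have EP := polar_annulus p a R h0a haR hcontP
  have EG := polar_annulus Gf a R h0a haR hcontG
  -- Fubini integrability in θ
  have hsubS : (Set.Icc a R ×ˢ Set.Ioo (-π) π : Set (ℝ × ℝ)) ⊆
      Set.Icc a R ×ˢ Set.Icc (-π) π := Set.prod_mono_right Set.Ioo_subset_Icc_self
  have hintP2 : Integrable (fun z : ℝ × ℝ => z.1 * p (z.1 * Real.cos z.2, z.1 * Real.sin z.2))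
      ((volume.restrict (Set.Icc a R)).prod (volume.restrict (Set.Ioo (-π) π))) := by
    rw [Measure.prod_restrict, ← Measure.volume_eq_prod]
    exact (hcontP.integrableOn_compact (isCompact_Icc.prod isCompact_Icc)).mono_set hsubS
  have hintG2 : Integrable (fun z : ℝ × ℝ => z.1 * Gf (z.1 * Real.cos z.2, z.1 * Real.sin z.2))
      ((volume.restrict (Set.Icc a R)).prod (volume.restrict (Set.Ioo (-π) π))) := by
    rw [Measure.prod_restrict, ← Measure.volume_eq_prod]
    exact (hcontG.integrableOn_compact (isCompact_Icc.prod isCompact_Icc)).mono_set hsubS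
  have hPθ : IntegrableOn
      (fun θ => ∫ r in Set.Icc a R, r * p (r * Real.cos θ, r * Real.sin θ))
      (Set.Ioo (-π) π) := by simpa [IntegrableOn] using hintP2.integral_prod_right
  have hGθ : IntegrableOn
      (fun θ => ∫ r in Set.Icc a R, r * Gf (r * Real.cos θ, r * Real.sin θ))
      (Set.Ioo (-π) π) := by simpa [IntegrableOn] using hintG2.integral_prod_right
  have hmainθ : (∫ θ in Set.Ioo (-π) π,
        ∫ r in Set.Icc a R, r * p (r * Real.cos θ, r * Real.sin θ)) ≤
      ∫ θ in Set.Ioo (-π) π, (2 * t * M ^ 2 +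
        4 * ∫ r in Set.Icc a R, r * Gf (r * Real.cos θ, r * Real.sin θ)) :=
    setIntegral_mono_on hPθ
      ((integrableOn_const measure_Ioo_lt_top.ne).add (hGθ.const_mul 4))
      measurableSet_Ioo hperθ
  have hsplit : (∫ θ in Set.Ioo (-π) π, (2 * t * M ^ 2 +
        4 * ∫ r in Set.Icc a R, r * Gf (r * Real.cos θ, r * Real.sin θ)))
      = 4 * π * t * M ^ 2 +
        4 * ∫ θ in Set.Ioo (-π) π, ∫ r in Set.Icc a R,
          r * Gf (r * Real.cos θ, r * Real.sin θ) := by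
    rw [integral_add (show IntegrableOn (fun _ : ℝ => 2 * t * M ^ 2) (Set.Ioo (-π) π) volume from
        integrableOn_const measure_Ioo_lt_top.ne) (hGθ.const_mul 4),
      setIntegral_const, measureReal_def, Real.volume_Ioo,
      ENNReal.toReal_ofReal (by linarith [Real.pi_pos] : (0:ℝ) ≤ π - -π),
      integral_const_mul]
    simp only [smul_eq_mul]
    ring
  have hIg0 : 0 ≤ ∫ y in A, Gf y := setIntegral_nonneg hA (fun y _ => by positivity)
  have hkey : (∫ y in A, p y) ≤ 4 * π * t * M ^ 2 + 4 * ∫ y in A, Gf y := by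
    rw [EP, EG]
    exact le_trans hmainθ (le_of_eq hsplit)
  have hst : Real.sqrt t ^ 2 = t := Real.sq_sqrt (by linarith)
  have hsg : Real.sqrt (∫ y in A, Gf y) ^ 2 = ∫ y in A, Gf y := Real.sq_sqrt hIg0
  have h1 : (∫ y in A, p y) ≤ (4 * (Real.sqrt t * M + Real.sqrt (∫ y in A, Gf y))) ^ 2 := by
    nlinarith [Real.pi_le_four,
      mul_nonneg (mul_nonneg (Real.sqrt_nonneg t) hM) (Real.sqrt_nonneg (∫ y in A, Gf y)),
      mul_nonneg (le_trans zero_le_one ht) (sq_nonneg M), hIg0, Real.sqrt_nonneg t, hM]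
  have h2 := Real.sqrt_le_sqrt h1
  rw [Real.sqrt_sq (by positivity)] at h2
  rw [← Real.sqrt_eq_rpow]
  exact h2
end
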